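/- arXiv:1510.08714 — 2 statements merged into one kernel-verified Lean document; each statement's English description precedes it below -/
import Mathlib

section
/- Let F be a linearly ordered field, A and B magnitudes of F, and a, b ∈ F such that the cosets α = a + A and β = b + B are zeroless (0 ∉ α and 0 ∉ β). Then (a·b)⁻¹ • (a • B + b • A + A * B) = a⁻¹ • A + b⁻¹ • B, and this set equals a⁻¹ • A or equals b⁻¹ • B; consequently the unity of the product coset αβ equals the unity of α or the unity of β. -/
open Pointwise

/-- A *magnitude* of a linearly ordered field `F` is an order-convex additive subgroup of `F`,
given as a set: it contains `0`, is closed under addition and negation, and is order-convex. -/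
def IsMagnitude {F : Type*} [Field F] [LinearOrder F] [IsStrictOrderedRing F] (A : Set F) : Prop :=
  (0 : F) ∈ A ∧ (∀ x ∈ A, ∀ y ∈ A, x + y ∈ A) ∧ (∀ x ∈ A, -x ∈ A) ∧
    (∀ x ∈ A, ∀ y ∈ A, ∀ z : F, x ≤ z → z ≤ y → z ∈ A)

/-- Order relation on subsets of `F`: `S ≤ T` iff every element of `S` is below some element of `T`. -/
def SetLE {F : Type*} [Field F] [LinearOrder F] [IsStrictOrderedRing F] (S T : Set F) : Prop :=
  ∀ x ∈ S, ∃ y ∈ T, x ≤ y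
/-!
Membership in a magnitude depends only on the absolute value, so two magnitudes are comparable
under inclusion and the sum of two magnitudes is the larger one. Zerolessness of `a + A` says
that every element of `A` is smaller than `a` in absolute value; hence `A * B ⊆ a • B` is
absorbed by `a • B`, and scaling by `(a * b)⁻¹` leaves the sum of the two magnitudes
`a⁻¹ • A` and `b⁻¹ • B`.
-/

namespace IsMagnitude

variable {F : Type*} [Field F] [LinearOrder F] [IsStrictOrderedRing F] {A B : Set F}

lemma mem_of_abs_le (hA : IsMagnitude A) {y z : F} (hy : y ∈ A) (h : |z| ≤ |y|) : z ∈ A := by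
  obtain ⟨-, -, hneg, hconv⟩ := hA
  have habs : |y| ∈ A := by
    rcases abs_choice y with hc | hc <;> rw [hc]
    · exact hy
    · exact hneg y hy
  obtain ⟨h1, h2⟩ := abs_le.mp h
  exact hconv _ (hneg _ habs) _ habs z h1 h2

lemma of_abs_le (h0 : (0 : F) ∈ A) (hadd : ∀ x ∈ A, ∀ y ∈ A, x + y ∈ A)
    (habs : ∀ y ∈ A, ∀ z : F, |z| ≤ |y| → z ∈ A) : IsMagnitude A := by
  refine ⟨h0, hadd, fun x hx => habs x hx _ (abs_neg x).le, fun x hx y hy z hxz hzy => ?_⟩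
  have hz := abs_le_max_abs_abs hxz hzy
  rcases le_total |x| |y| with hxy | hyx
  · exact habs y hy z (by rwa [max_eq_right hxy] at hz)
  · exact habs x hx z (by rwa [max_eq_left hyx] at hz)

lemma smul (hA : IsMagnitude A) {c : F} (hc : c ≠ 0) : IsMagnitude (c • A) := by
  refine of_abs_le ⟨0, hA.1, smul_zero c⟩ ?_ ?_
  · rintro _ ⟨u, hu, rfl⟩ _ ⟨v, hv, rfl⟩
    exact ⟨u + v, hA.2.1 u hu v hv, smul_add c u v⟩
  · rintro _ ⟨u, hu, rfl⟩ z hz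
    refine ⟨c⁻¹ * z, hA.mem_of_abs_le hu ?_, by simp [smul_eq_mul, hc]⟩
    rw [abs_mul, abs_inv, inv_mul_le_iff₀ (abs_pos.mpr hc)]
    simpa only [smul_eq_mul, abs_mul] using hz

lemma subset_total (hA : IsMagnitude A) (hB : IsMagnitude B) : A ⊆ B ∨ B ⊆ A := by
  by_contra! h
  obtain ⟨x, hxA, hxB⟩ := Set.not_subset.mp h.1
  obtain ⟨y, hyB, hyA⟩ := Set.not_subset.mp h.2
  rcases le_total |x| |y| with hxy | hyx
  · exact hxB (hB.mem_of_abs_le hyB hxy)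
  · exact hyA (hA.mem_of_abs_le hxA hyx)

lemma add_eq_left_of_subset (hA : IsMagnitude A) {T : Set F} (hT0 : (0 : F) ∈ T) (hTA : T ⊆ A) :
    A + T = A :=
  (Set.add_subset_iff.mpr fun x hx y hy => hA.2.1 x hx y (hTA hy)).antisymm
    (Set.subset_add_left A hT0)

lemma add_eq_left_or_right (hA : IsMagnitude A) (hB : IsMagnitude B) : A + B = A ∨ A + B = B :=
  (subset_total hA hB).symm.imp (hA.add_eq_left_of_subset hB.1)
    fun h => (add_comm A B).trans (hB.add_eq_left_of_subset hA.1 h)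

lemma abs_lt_of_zero_notMem_singleton_add (hA : IsMagnitude A) {a : F}
    (h : (0 : F) ∉ ({a} + A)) {p : F} (hp : p ∈ A) : |p| < |a| := by
  by_contra! hle
  have hna : -a ∈ A := hA.mem_of_abs_le hp (by rwa [abs_neg])
  exact h (Set.mem_add.mpr ⟨a, rfl, -a, hna, add_neg_cancel a⟩)

lemma ne_zero_of_zero_notMem_singleton_add (hA : IsMagnitude A) {a : F}
    (h : (0 : F) ∉ ({a} + A)) : a ≠ 0 :=
  abs_pos.mp (abs_zero (α := F) ▸ hA.abs_lt_of_zero_notMem_singleton_add h hA.1)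

lemma mul_subset_smul (hB : IsMagnitude B) {a : F} (ha : a ≠ 0) (hAa : ∀ p ∈ A, |p| ≤ |a|) :
    A * B ⊆ a • B := by
  rintro _ ⟨p, hp, q, hq, rfl⟩
  refine ⟨a⁻¹ * (p * q), hB.mem_of_abs_le hq ?_, by simp [smul_eq_mul, ha]⟩
  rw [abs_mul, abs_inv, abs_mul, inv_mul_le_iff₀ (abs_pos.mpr ha)]
  exact mul_le_mul_of_nonneg_right (hAa p hp) (abs_nonneg q)

lemma inv_mul_smul_add_add_mul_eq (hA : IsMagnitude A) (hB : IsMagnitude B) {a b : F}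
    (hzlA : (0 : F) ∉ ({a} + A)) (hzlB : (0 : F) ∉ ({b} + B)) :
    (a * b)⁻¹ • (a • B + b • A + A * B) = a⁻¹ • A + b⁻¹ • B := by
  have ha := hA.ne_zero_of_zero_notMem_singleton_add hzlA
  have hb := hB.ne_zero_of_zero_notMem_singleton_add hzlB
  have hAB : a • B + A * B = a • B :=
    (hB.smul ha).add_eq_left_of_subset ⟨0, hA.1, 0, hB.1, mul_zero 0⟩
      (hB.mul_subset_smul ha fun p hp => (hA.abs_lt_of_zero_notMem_singleton_add hzlA hp).le)
  have hca : (a * b)⁻¹ * a = b⁻¹ := by field_simp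
  have hcb : (a * b)⁻¹ * b = a⁻¹ := by field_simp
  rw [add_right_comm, hAB, smul_add, smul_smul, smul_smul, hca, hcb, add_comm]

end IsMagnitude

theorem unity_of_product {F : Type*} [Field F] [LinearOrder F] [IsStrictOrderedRing F]
    (A B : Set F) (hA : IsMagnitude A) (hB : IsMagnitude B) (a b : F)
    (hzlA : (0 : F) ∉ ({a} + A)) (hzlB : (0 : F) ∉ ({b} + B)) :
    (a * b)⁻¹ • (a • B + b • A + A * B) = a⁻¹ • A + b⁻¹ • B ∧
      ((a * b)⁻¹ • (a • B + b • A + A * B) = a⁻¹ • A ∨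
        (a * b)⁻¹ • (a • B + b • A + A * B) = b⁻¹ • B) ∧
      (({1} + (a * b)⁻¹ • (a • B + b • A + A * B)) = {1} + a⁻¹ • A ∨
        ({1} + (a * b)⁻¹ • (a • B + b • A + A * B)) = {1} + b⁻¹ • B) := by
  have ha := hA.ne_zero_of_zero_notMem_singleton_add hzlA
  have hb := hB.ne_zero_of_zero_notMem_singleton_add hzlB
  have hsum := (hA.smul (inv_ne_zero ha)).add_eq_left_or_right (hB.smul (inv_ne_zero hb))
  rw [hA.inv_mul_smul_add_add_mul_eq hB hzlA hzlB]
  exact ⟨rfl, hsum, hsum.imp (congrArg ({1} + ·)) (congrArg ({1} + ·))⟩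
end

section
/- Let F be a linearly ordered field, A a magnitude of F, a ∈ F, and suppose the coset α = a + A is zeroless (0 ∉ α). Then, with Minkowski (pointwise) set products and α⁻¹ = {x⁻¹ | x ∈ α}: α * α⁻¹ = {1} + a⁻¹ • A and α * ({1} + a⁻¹ • A) = α; hence α * α⁻¹ * α = α, so every zeroless coset is a regular element of the commutative semigroup of zeroless cosets under Minkowski multiplication, with {1} + a⁻¹ • A acting as its individualized neutral element (unity). -/
/-!
Write `α = a + A`. Zerolessness says `a ∉ A`; since `A` is an order-convex subgroup it is closed
under `z ↦ c * z` for `|c| ≤ 1`, so every `x ∈ A` has `|x| < |a|`, and applied to `y + y` this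
gives `|a| ≤ 2 |a + y|`. The identities
`(a + x) / (a + y) = 1 + a⁻¹ * (a / (2 (a + y)) * 2 (x - y))` and
`(a + x) (1 + a⁻¹ t) = a + (x + t + (x / a) * t)`
then place the products in `1 + a⁻¹ A` and in `a + A`, because the coefficients
`a / (2 (a + y))` and `x / a` have absolute value at most `1`.
-/

open Pointwise

namespace IsMagnitude

variable {F : Type*} [Field F] [LinearOrder F] [IsStrictOrderedRing F] {A : Set F} {a x y z w : F}

theorem zero_mem (hA : IsMagnitude A) : (0 : F) ∈ A := hA.1

theorem add_mem (hA : IsMagnitude A) (hx : x ∈ A) (hy : y ∈ A) : x + y ∈ A := hA.2.1 x hx y hy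

theorem neg_mem (hA : IsMagnitude A) (hx : x ∈ A) : -x ∈ A := hA.2.2.1 x hx

theorem sub_mem (hA : IsMagnitude A) (hx : x ∈ A) (hy : y ∈ A) : x - y ∈ A := by
  simpa only [sub_eq_add_neg] using hA.add_mem hx (hA.neg_mem hy)

theorem mem_of_abs_le_s17 (hA : IsMagnitude A) (hz : z ∈ A) (hwz : |w| ≤ |z|) : w ∈ A := by
  have habs : |z| ∈ A := by
    rcases abs_choice z with h | h <;> rw [h]
    exacts [hz, hA.neg_mem hz]
  exact hA.2.2.2 _ (hA.neg_mem habs) _ habs w (abs_le.mp hwz).1 (abs_le.mp hwz).2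

theorem mul_mem_of_abs_le_one (hA : IsMagnitude A) {c : F} (hc : |c| ≤ 1) (hz : z ∈ A) :
    c * z ∈ A :=
  hA.mem_of_abs_le_s17 hz <| by
    rw [abs_mul]; exact mul_le_of_le_one_left (abs_nonneg z) hc

theorem notMem_of_zero_notMem_singleton_add (hA : IsMagnitude A) (h : (0 : F) ∉ {a} + A) :
    a ∉ A := fun ha => h ⟨a, rfl, -a, hA.neg_mem ha, add_neg_cancel a⟩

theorem abs_lt_of_notMem (hA : IsMagnitude A) (ha : a ∉ A) (hx : x ∈ A) : |x| < |a| :=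
  lt_of_not_ge fun hax => ha (hA.mem_of_abs_le_s17 hx hax)

theorem ne_zero_of_notMem (hA : IsMagnitude A) (ha : a ∉ A) : a ≠ 0 :=
  fun h => ha (h ▸ hA.zero_mem)

theorem add_ne_zero_of_notMem (hA : IsMagnitude A) (ha : a ∉ A) (hy : y ∈ A) : a + y ≠ 0 :=
  fun h => ha (by simpa [eq_neg_of_add_eq_zero_right h] using hA.neg_mem hy)

theorem abs_le_two_mul_abs_add (hA : IsMagnitude A) (ha : a ∉ A) (hy : y ∈ A) :
    |a| ≤ 2 * |a + y| := by
  have h2y : 2 * |y| < |a| := by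
    simpa only [← two_mul, abs_mul, abs_two] using hA.abs_lt_of_notMem ha (hA.add_mem hy hy)
  have hsum : |a| ≤ |a + y| + |y| := by simpa using abs_sub (a + y) y
  linarith

theorem singleton_add_mul_inv_image (hA : IsMagnitude A) (ha : a ∉ A) :
    ({a} + A) * ((fun x => x⁻¹) '' ({a} + A)) = {1} + a⁻¹ • A := by
  have ha0 := hA.ne_zero_of_notMem ha
  ext w
  simp only [Set.singleton_add, Set.mem_mul, Set.image_image, Set.mem_image, Set.mem_smul_set,
    exists_exists_and_eq_and, smul_eq_mul]
  constructor
  · rintro ⟨x, hx, y, hy, rfl⟩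
    have hay := hA.add_ne_zero_of_notMem ha hy
    have hc : |a / (2 * (a + y))| ≤ 1 := by
      rw [abs_div, abs_mul, abs_two]
      exact div_le_one_of_le₀ (hA.abs_le_two_mul_abs_add ha hy) (by positivity)
    refine ⟨a / (2 * (a + y)) * ((x - y) + (x - y)),
      hA.mul_mem_of_abs_le_one hc (hA.add_mem (hA.sub_mem hx hy) (hA.sub_mem hx hy)), ?_⟩
    field_simp
    ring
  · rintro ⟨t, ht, rfl⟩
    exact ⟨t, ht, 0, hA.zero_mem, by rw [add_zero]; field_simp⟩

theorem singleton_add_mul_unity (hA : IsMagnitude A) (ha : a ∉ A) :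
    ({a} + A) * ({1} + a⁻¹ • A) = {a} + A := by
  ext w
  simp only [Set.singleton_add, Set.mem_mul, Set.mem_image, Set.mem_smul_set,
    exists_exists_and_eq_and, smul_eq_mul]
  constructor
  · rintro ⟨x, hx, t, ht, rfl⟩
    have ha0 := hA.ne_zero_of_notMem ha
    have hc : |x / a| ≤ 1 := by
      rw [abs_div]; exact div_le_one_of_le₀ (hA.abs_lt_of_notMem ha hx).le (abs_nonneg a)
    refine ⟨x + t + x / a * t, hA.add_mem (hA.add_mem hx ht) (hA.mul_mem_of_abs_le_one hc ht), ?_⟩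
    field_simp
    ring
  · rintro ⟨x, hx, rfl⟩
    exact ⟨x, hx, 0, hA.zero_mem, by simp⟩

end IsMagnitude

theorem coset_multiplicative_regular {F : Type*} [Field F] [LinearOrder F] [IsStrictOrderedRing F]
    (A : Set F) (hA : IsMagnitude A) (a : F) (hzl : (0 : F) ∉ ({a} + A)) :
    ({a} + A) * ((fun x => x⁻¹) '' ({a} + A)) = {1} + a⁻¹ • A ∧
      ({a} + A) * ({1} + a⁻¹ • A) = ({a} + A) ∧
      ({a} + A) * ((fun x => x⁻¹) '' ({a} + A)) * ({a} + A) = ({a} + A) := by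
  have ha : a ∉ A := hA.notMem_of_zero_notMem_singleton_add hzl
  have hinv := hA.singleton_add_mul_inv_image ha
  have hunity := hA.singleton_add_mul_unity ha
  refine ⟨hinv, hunity, ?_⟩
  rw [hinv, mul_comm, hunity]
end
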